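/- Static regret for Optimistic Normalized Exponentiated Subgradient (ONES with θ_t ≡ 1): Let n ∈ ℕ, Δ^n = {w ∈ ℝ^{n+1} : w ≥ 0, Σ_i w_i = 1}, and a ∈ Δ^n with all coordinates strictly positive. Let T ≥ 1, η_1 ≥ η_2 ≥ … ≥ η_{T+1} > 0, and ℓ_t, ℓ̂_t ∈ ℝ^{n+1} for t = 1,…,T. Define, with N(v) = v/(Σ_i v_i) and ∘ the coordinatewise product: w̃_t = N(a ∘ exp(−η_t Σ_{i=1}^{t−1} ℓ_i)) and w_t = N(w̃_t ∘ exp(−η_t ℓ̂_t)) (exponential taken coordinatewise). Then for every u ∈ Δ^n: Σ_{t=1}^T ⟨ℓ_t, w_t − u⟩ ≤ (1/η_{T+1}) Σ_i u_i ln(u_i/a_i) + Σ_{t=1}^T (1/η_t) Q_2*(η_t ‖ℓ_t − ℓ̂_t‖_∞) − Σ_{t=1}^T (1/η_t) Σ_i w_{t,i} ln(w_{t,i}/w̃_{t,i}), where Q_2*(κ) = κ²/2 − (|κ| − 2)₊²/2 and the convention 0 ln(0/c) = 0 is used. -/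

import Mathlib

/-!
Split `ℓ_t = (ℓ_t - ℓ̂_t) + ℓ̂_t` around `v_t = N(w̃_t ∘ exp(-η_t ℓ_t))`, the step that already
knows `ℓ_t`. The three-point identities of the two entropic mirror steps `w_t` and `v_t` from
`w̃_t` leave the prediction error `⟨η_t (ℓ_t - ℓ̂_t), w_t - v_t⟩ - KL(v_t ‖ w_t)`, which Pinsker's
inequality and the Fenchel–Young inequality for `Q_2` bound by `Q_2*(η_t ‖ℓ_t - ℓ̂_t‖_∞)`.
What remains, `(KL(u ‖ w̃_t) - KL(u ‖ v_t)) / η_t`, telescopes through the potential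
`⟨u, L_t⟩ + η_t⁻¹ log ∑ᵢ aᵢ exp(-η_t L_{t,i})` of the cumulative losses `L_t`: the map
`η ↦ η⁻¹ log ∑ᵢ aᵢ exp(-η Lᵢ)` is nondecreasing (power means), so shrinking step sizes only help,
and the last potential is bounded below by `-KL(u ‖ a) / η_{T+1}` since divergences are nonnegative.
-/

open Finset

/-- The probability simplex `Δⁿ ⊆ ℝ^{n+1}`. -/
def simplex (n : ℕ) : Set (Fin (n + 1) → ℝ) :=
  {w | (∀ i, 0 ≤ w i) ∧ ∑ i, w i = 1}

/-- The normalization operator `N(v) = v / ∑ᵢ vᵢ`. -/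
noncomputable def nrm {n : ℕ} (v : Fin (n + 1) → ℝ) : Fin (n + 1) → ℝ :=
  fun i => v i / ∑ j, v j

/-- The `ℓ∞` (max) norm on `ℝ^{n+1}`. -/
noncomputable def linf {n : ℕ} (v : Fin (n + 1) → ℝ) : ℝ :=
  Finset.univ.sup' Finset.univ_nonempty fun i => |v i|

/-- `Q_2*(κ) = κ²/2 − (|κ| − 2)₊²/2`, the conjugate of the truncated quadratic `Q_2`. -/
noncomputable def Q2star (κ : ℝ) : ℝ :=
  κ ^ 2 / 2 - (max (|κ| - 2) 0) ^ 2 / 2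

open Real InformationTheory

lemma two_mul_sub_one_le_add_one_mul_log {x : ℝ} (hx : 1 ≤ x) :
    2 * (x - 1) ≤ (x + 1) * log x := by
  have hx1 : 0 < x + 1 := by linarith
  have h := sum_range_le_log_div (x := (x - 1) / (x + 1)) (by positivity)
    (by rw [div_lt_one hx1]; linarith) 1
  have hx' : (1 + (x - 1) / (x + 1)) / (1 - (x - 1) / (x + 1)) = x := by
    field_simp; ring
  simp only [range_one, sum_singleton, mul_zero, zero_add, pow_one, Nat.cast_zero, div_one,
    hx'] at h
  rw [div_le_iff₀ hx1] at h
  linarith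

lemma add_one_mul_log_le_two_mul_sub_one {x : ℝ} (hx0 : 0 < x) (hx : x ≤ 1) :
    (x + 1) * log x ≤ 2 * (x - 1) := by
  have h := two_mul_sub_one_le_add_one_mul_log (one_le_inv₀ hx0 |>.2 hx)
  rw [log_inv] at h
  have h' := mul_le_mul_of_nonneg_left h hx0.le
  field_simp at h'
  linarith

lemma three_mul_sq_sub_one_le_klFun {x : ℝ} (hx : 0 ≤ x) :
    3 * (x - 1) ^ 2 ≤ 2 * (x + 2) * klFun x := by
  set F : ℝ → ℝ := fun x => 2 * (x + 2) * klFun x - 3 * (x - 1) ^ 2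
  have hF : ∀ y ≠ 0, HasDerivAt F (4 * ((y + 1) * log y - 2 * (y - 1))) y := fun y hy => by
    refine ((((hasDerivAt_id' y).add_const 2).const_mul 2).mul (hasDerivAt_klFun hy)).sub
      ((((hasDerivAt_id' y).sub_const 1).pow 2).const_mul 3) |>.congr_deriv ?_
    rw [klFun]
    ring
  have hFc : Continuous F := by fun_prop
  have hF1 : F 1 = 0 := by simp [F, klFun_one]
  suffices 0 ≤ F x by simp only [F] at this; linarith
  rcases le_total 1 x with h1 | h1
  · have hmono : MonotoneOn F (Set.Ici 1) := by
      refine monotoneOn_of_hasDerivWithinAt_nonneg (convex_Ici 1) hFc.continuousOn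
        (fun y hy => (hF y ?_).hasDerivWithinAt) fun y hy => ?_
      all_goals rw [interior_Ici] at hy
      · exact (zero_lt_one.trans hy).ne'
      · linarith [two_mul_sub_one_le_add_one_mul_log (Set.mem_Ioi.1 hy).le]
    simpa [hF1] using hmono (Set.mem_Ici.2 le_rfl) h1 h1
  · have hanti : AntitoneOn F (Set.Icc 0 1) := by
      refine antitoneOn_of_hasDerivWithinAt_nonpos (convex_Icc 0 1) hFc.continuousOn
        (fun y hy => (hF y ?_).hasDerivWithinAt) fun y hy => ?_
      all_goals rw [interior_Icc] at hy
      · exact hy.1.ne'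
      · linarith [add_one_mul_log_le_two_mul_sub_one hy.1 hy.2.le]
    simpa [hF1] using hanti ⟨hx, h1⟩ (Set.right_mem_Icc.2 zero_le_one) h1

lemma sq_sub_div_le_mul_log_div {p q : ℝ} (hp : 0 ≤ p) (hq : 0 < q) :
    (p - q) ^ 2 / (p + 2 * q) ≤ 2 / 3 * (p * log (p / q) + q - p) := by
  have h := three_mul_sq_sub_one_le_klFun (div_nonneg hp hq.le)
  set x := p / q
  have hp' : p = q * x := (mul_div_cancel₀ _ hq.ne').symm
  rw [klFun] at h
  rw [div_le_iff₀ (by positivity), hp']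
  nlinarith [mul_le_mul_of_nonneg_left h (sq_nonneg q)]

lemma mul_le_Q2star_add_sq_div_two (κ : ℝ) {s : ℝ} (hs : |s| ≤ 2) :
    κ * s ≤ Q2star κ + s ^ 2 / 2 := by
  have hκs : κ * s ≤ |κ| * |s| := (le_abs_self _).trans (abs_mul κ s).le
  rw [Q2star, ← sq_abs s]
  rcases le_or_gt |κ| 2 with hκ | hκ
  · rw [max_eq_right (by linarith)]
    nlinarith [sq_nonneg (|κ| - |s|), sq_abs κ]
  · rw [max_eq_left (by linarith)]
    nlinarith [mul_nonneg (by linarith : 0 ≤ |κ| - 2) (by linarith : 0 ≤ 2 - |s|), sq_abs κ]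

section FiniteDistributions

variable {ι : Type*} [Fintype ι]

/-- `Real.log 0 = 0` gives the convention `0 ln (0 / q) = 0`. -/
noncomputable def kl (p q : ι → ℝ) : ℝ :=
  ∑ i, p i * log (p i / q i)

lemma kl_self (x : ι → ℝ) : kl x x = 0 :=
  sum_eq_zero fun i _ => by by_cases h : x i = 0 <;> simp [h]

/-- Sedrakyan's inequality with the weights `p i + 2 q i`, whose total is `3`. -/
theorem sum_abs_sub_sq_le_two_mul_kl {p q : ι → ℝ} (hp : ∀ i, 0 ≤ p i) (hp1 : ∑ i, p i = 1)
    (hq : ∀ i, 0 < q i) (hq1 : ∑ i, q i = 1) :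
    (∑ i, |p i - q i|) ^ 2 ≤ 2 * kl p q := by
  have hden : ∑ i, (p i + 2 * q i) = 3 := by
    rw [sum_add_distrib, ← mul_sum, hp1, hq1]; norm_num
  calc (∑ i, |p i - q i|) ^ 2 = (∑ i, |p i - q i|) ^ 2 / (∑ i, (p i + 2 * q i)) * 3 := by
        rw [hden]; ring
    _ ≤ (∑ i, |p i - q i| ^ 2 / (p i + 2 * q i)) * 3 := by
        gcongr 1
        exact sq_sum_div_le_sum_sq_div _ _ fun i _ => by linarith [hp i, hq i]
    _ ≤ (∑ i, 2 / 3 * (p i * log (p i / q i) + q i - p i)) * 3 := by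
        gcongr with i
        rw [sq_abs]
        exact sq_sub_div_le_mul_log_div (hp i) (hq i)
    _ = 2 * kl p q := by
        rw [← mul_sum, sum_sub_distrib, sum_add_distrib, hp1, hq1, kl]; ring

lemma kl_nonneg {p q : ι → ℝ} (hp : ∀ i, 0 ≤ p i) (hp1 : ∑ i, p i = 1) (hq : ∀ i, 0 < q i)
    (hq1 : ∑ i, q i = 1) : 0 ≤ kl p q := by
  nlinarith [sq_nonneg (∑ i, |p i - q i|), sum_abs_sub_sq_le_two_mul_kl hp hp1 hq hq1]

lemma sum_abs_sub_le_two {w v : ι → ℝ} (hw : ∀ i, 0 ≤ w i) (hw1 : ∑ i, w i = 1)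
    (hv : ∀ i, 0 ≤ v i) (hv1 : ∑ i, v i = 1) : ∑ i, |w i - v i| ≤ 2 :=
  calc ∑ i, |w i - v i| ≤ ∑ i, (w i + v i) := sum_le_sum fun i _ => by
        simpa [abs_of_nonneg (hw i), abs_of_nonneg (hv i)] using abs_sub (w i) (v i)
    _ = 2 := by rw [sum_add_distrib, hw1, hv1]; norm_num

/-- Pinsker's inequality and `κ s ≤ Q_2*(κ) + s² / 2` for `s = ‖w - v‖₁ ≤ 2`. -/
theorem sum_mul_sub_le_Q2star_add_kl {g w v : ι → ℝ} (hw : ∀ i, 0 < w i) (hw1 : ∑ i, w i = 1)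
    (hv : ∀ i, 0 ≤ v i) (hv1 : ∑ i, v i = 1) {κ : ℝ} (hg : ∀ i, |g i| ≤ κ) :
    ∑ i, g i * (w i - v i) ≤ Q2star κ + kl v w := by
  set s := ∑ i, |w i - v i|
  have hs : |s| ≤ 2 := by
    rw [abs_of_nonneg (sum_nonneg fun i _ => abs_nonneg _)]
    exact sum_abs_sub_le_two (fun i => (hw i).le) hw1 hv hv1
  have hgs : ∑ i, g i * (w i - v i) ≤ κ * s := by
    rw [mul_sum]
    refine sum_le_sum fun i _ => ?_
    calc g i * (w i - v i) ≤ |g i| * |w i - v i| := (le_abs_self _).trans (abs_mul _ _).le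
      _ ≤ κ * |w i - v i| := mul_le_mul_of_nonneg_right (hg i) (abs_nonneg _)
  have hpinsker : s ^ 2 ≤ 2 * kl v w := by
    simpa only [s, abs_sub_comm] using sum_abs_sub_sq_le_two_mul_kl hv hv1 hw hw1
  linarith [mul_le_Q2star_add_sq_div_two κ hs]

noncomputable def scaledLogPartition (a L : ι → ℝ) (η : ℝ) : ℝ :=
  η⁻¹ * log (∑ i, a i * exp (-(η * L i)))

lemma sum_mul_exp_pos {a : ι → ℝ} (ha : ∀ i, 0 ≤ a i) (ha1 : ∑ i, a i = 1) (f : ι → ℝ) :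
    0 < ∑ i, a i * exp (f i) := by
  obtain ⟨i, -, hi⟩ := 
    exists_lt_of_sum_lt (f := fun _ => (0 : ℝ)) (g := a) (s := univ) (by simp [ha1])
  exact sum_pos' (fun j _ => mul_nonneg (ha j) (exp_pos _).le) ⟨i, mem_univ i, by positivity⟩

/-- The power-mean inequality with exponent `η / η' ≥ 1`. -/
theorem monotoneOn_scaledLogPartition {a : ι → ℝ} (ha : ∀ i, 0 ≤ a i) (ha1 : ∑ i, a i = 1)
    (L : ι → ℝ) : MonotoneOn (scaledLogPartition a L) (Set.Ioi 0) := by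
  intro η' hη' η _ hη'η
  have hη' : 0 < η' := hη'
  set r := η / η'
  have hr : 1 ≤ r := (one_le_div hη').2 hη'η
  have hη'r : η' * r = η := mul_div_cancel₀ η hη'.ne'
  have hpow : ∀ i, exp (-(η' * L i)) ^ r = exp (-(η * L i)) := fun i => by
    rw [← exp_mul, ← hη'r]
    ring_nf
  have hmean := arith_mean_le_rpow_mean univ a (fun i => exp (-(η' * L i))) (fun i _ => ha i) ha1
    (fun i _ => (exp_pos _).le) hr
  simp only [hpow] at hmean
  have hlog := log_le_log (sum_mul_exp_pos ha ha1 _) hmean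
  rw [log_rpow (sum_mul_exp_pos ha ha1 _)] at hlog
  calc scaledLogPartition a L η'
      ≤ η'⁻¹ * (1 / r * log (∑ i, a i * exp (-(η * L i)))) :=
        mul_le_mul_of_nonneg_left hlog (inv_nonneg.2 hη'.le)
    _ = scaledLogPartition a L η := by
        rw [scaledLogPartition, ← mul_assoc, one_div, ← mul_inv, hη'r]

noncomputable def onesPotential (u a L : ι → ℝ) (η : ℝ) : ℝ :=
  ∑ i, u i * L i + scaledLogPartition a L η

end FiniteDistributions

section Simplex

variable {n : ℕ}

lemma nrm_pos {v : Fin (n + 1) → ℝ} (hv : ∀ i, 0 < v i) (i : Fin (n + 1)) : 0 < nrm v i :=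
  div_pos (hv i) (sum_pos (fun j _ => hv j) univ_nonempty)

lemma sum_nrm {v : Fin (n + 1) → ℝ} (hv : ∑ j, v j ≠ 0) : ∑ i, nrm v i = 1 := by
  simp only [nrm, ← sum_div, div_self hv]

lemma nrm_nrm_mul {c e : Fin (n + 1) → ℝ} (hc : ∑ j, c j ≠ 0) :
    nrm (fun i => nrm c i * e i) = nrm fun i => c i * e i := by
  funext i
  simp only [nrm, div_mul_eq_mul_div, ← sum_div]
  rcases eq_or_ne (∑ j, c j * e j) 0 with h | h
  · simp [h]
  · field_simp

lemma sum_mul_exp_ne_zero {c : Fin (n + 1) → ℝ} (hc : ∀ i, 0 < c i) (g : Fin (n + 1) → ℝ) :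
    ∑ i, c i * exp (g i) ≠ 0 :=
  (sum_pos (fun i _ => mul_pos (hc i) (exp_pos _)) univ_nonempty).ne'

lemma nrm_mul_exp_pos {c : Fin (n + 1) → ℝ} (hc : ∀ i, 0 < c i) (g : Fin (n + 1) → ℝ)
    (i : Fin (n + 1)) : 0 < nrm (fun i => c i * exp (g i)) i :=
  nrm_pos (fun i => mul_pos (hc i) (exp_pos _)) i

lemma sum_nrm_mul_exp {c : Fin (n + 1) → ℝ} (hc : ∀ i, 0 < c i) (g : Fin (n + 1) → ℝ) :
    ∑ i, nrm (fun i => c i * exp (g i)) i = 1 :=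
  sum_nrm (sum_mul_exp_ne_zero hc g)

lemma abs_le_linf (v : Fin (n + 1) → ℝ) (i : Fin (n + 1)) : |v i| ≤ linf v :=
  le_sup' (fun i => |v i|) (mem_univ i)

lemma kl_nrm_mul_exp {u c g : Fin (n + 1) → ℝ} (hu1 : ∑ i, u i = 1) (hc : ∀ i, 0 < c i) :
    kl u (nrm fun i => c i * exp (-g i))
      = kl u c + ∑ i, u i * g i + log (∑ i, c i * exp (-g i)) := by
  set Z := ∑ i, c i * exp (-g i)
  have hZ : Z ≠ 0 := sum_mul_exp_ne_zero hc _
  have hterm : ∀ i, u i * log (u i / nrm (fun i => c i * exp (-g i)) i)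
      = u i * log (u i / c i) + u i * g i + u i * log Z := fun i => by
    rcases eq_or_ne (u i) 0 with h | h
    · simp [h]
    have : u i / nrm (fun i => c i * exp (-g i)) i = u i / c i * (exp (g i) * Z) := by
      rw [show nrm (fun i => c i * exp (-g i)) i = c i * exp (-g i) / Z from rfl, exp_neg]
      field_simp [(hc i).ne', (exp_pos (g i)).ne']
    rw [this, log_mul (div_ne_zero h (hc i).ne') (mul_ne_zero (exp_ne_zero _) hZ), log_mul
      (exp_ne_zero _) hZ, log_exp]
    ring
  simp only [kl, hterm, sum_add_distrib, ← sum_mul, hu1, one_mul]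

/-- The three-point identity of the entropic mirror step `x = N(c ∘ exp(-g))`. -/
theorem sum_mul_nrm_mul_exp_sub {u c g : Fin (n + 1) → ℝ} (hu1 : ∑ i, u i = 1)
    (hc : ∀ i, 0 < c i) :
    ∑ i, g i * (nrm (fun i => c i * exp (-g i)) i - u i)
      = kl u c - kl u (nrm fun i => c i * exp (-g i))
        - kl (nrm fun i => c i * exp (-g i)) c := by
  set x := nrm fun i => c i * exp (-g i)
  have hx1 : ∑ i, x i = 1 := sum_nrm_mul_exp hc _
  have hu := kl_nrm_mul_exp (g := g) hu1 hc
  have hx := kl_nrm_mul_exp (g := g) hx1 hc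
  rw [kl_self] at hx
  have hsplit : ∑ i, g i * (x i - u i) = ∑ i, x i * g i - ∑ i, u i * g i := by
    rw [← sum_sub_distrib]
    exact sum_congr rfl fun i _ => by ring
  linarith

theorem optimistic_step_le {c u ℓ ℓhat : Fin (n + 1) → ℝ} (hc : ∀ i, 0 < c i)
    (hu1 : ∑ i, u i = 1) {η : ℝ} (hη : 0 ≤ η) :
    η * ∑ i, ℓ i * (nrm (fun i => c i * exp (-(η * ℓhat i))) i - u i)
      ≤ Q2star (η * linf (ℓ - ℓhat)) - kl (nrm fun i => c i * exp (-(η * ℓhat i))) c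
        + kl u c - kl u (nrm fun i => c i * exp (-(η * ℓ i))) := by
  set w := nrm fun i => c i * exp (-(η * ℓhat i))
  set v := nrm fun i => c i * exp (-(η * ℓ i))
  have hw : ∀ i, 0 < w i := nrm_mul_exp_pos hc _
  have hv : ∀ i, 0 < v i := nrm_mul_exp_pos hc _
  have hw1 : ∑ i, w i = 1 := sum_nrm_mul_exp hc _
  have hv1 : ∑ i, v i = 1 := sum_nrm_mul_exp hc _
  have hwv : ∑ i, η * ℓhat i * (w i - v i) = kl v c - kl v w - kl w c :=
    sum_mul_nrm_mul_exp_sub hv1 hc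
  have hvu : ∑ i, η * ℓ i * (v i - u i) = kl u c - kl u v - kl v c :=
    sum_mul_nrm_mul_exp_sub hu1 hc
  have herr : ∑ i, η * (ℓ i - ℓhat i) * (w i - v i) ≤ Q2star (η * linf (ℓ - ℓhat)) + kl v w :=
    sum_mul_sub_le_Q2star_add_kl hw hw1 (fun i => (hv i).le) hv1 fun i => by
      rw [abs_mul, abs_of_nonneg hη]
      exact mul_le_mul_of_nonneg_left (abs_le_linf (ℓ - ℓhat) i) hη
  have hsplit : η * ∑ i, ℓ i * (w i - u i) = ∑ i, η * (ℓ i - ℓhat i) * (w i - v i)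
      + ∑ i, η * ℓhat i * (w i - v i) + ∑ i, η * ℓ i * (v i - u i) := by
    rw [mul_sum, ← sum_add_distrib, ← sum_add_distrib]
    exact sum_congr rfl fun i _ => by ring
  linarith

lemma inv_mul_kl_nrm_mul_exp {u a L : Fin (n + 1) → ℝ} (hu1 : ∑ i, u i = 1)
    (ha : ∀ i, 0 < a i) {η : ℝ} (hη : η ≠ 0) :
    η⁻¹ * kl u (nrm fun i => a i * exp (-(η * L i)))
      = η⁻¹ * kl u a + onesPotential u a L η := by
  have hsum : ∑ i, u i * (η * L i) = η * ∑ i, u i * L i := by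
    rw [mul_sum]
    exact sum_congr rfl fun i _ => by ring
  rw [kl_nrm_mul_exp hu1 ha, hsum, onesPotential, scaledLogPartition]
  field_simp
  ring

lemma neg_inv_mul_kl_le_onesPotential {u a : Fin (n + 1) → ℝ} (hu : ∀ i, 0 ≤ u i)
    (hu1 : ∑ i, u i = 1) (ha : ∀ i, 0 < a i) (L : Fin (n + 1) → ℝ) {η : ℝ} (hη : 0 < η) :
    -(η⁻¹ * kl u a) ≤ onesPotential u a L η := by
  have hkl := mul_nonneg (inv_nonneg.2 hη.le)
    (kl_nonneg hu hu1 (nrm_mul_exp_pos ha fun i => -(η * L i)) (sum_nrm_mul_exp ha _))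
  rw [inv_mul_kl_nrm_mul_exp hu1 ha hη.ne'] at hkl
  linarith

theorem ones_round_le {a u L ℓ ℓhat wtil w : Fin (n + 1) → ℝ} (ha : ∀ i, 0 < a i)
    (ha1 : ∑ i, a i = 1) (hu1 : ∑ i, u i = 1) {η η' : ℝ} (hη' : 0 < η') (hη'η : η' ≤ η)
    (hwtil : wtil = nrm fun i => a i * exp (-η * L i))
    (hw : w = nrm fun i => wtil i * exp (-η * ℓhat i)) :
    ∑ i, ℓ i * (w i - u i) + (onesPotential u a (L + ℓ) η' - onesPotential u a L η)
      ≤ η⁻¹ * Q2star (η * linf (ℓ - ℓhat)) - η⁻¹ * kl w wtil := by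
  have hη : 0 < η := hη'.trans_le hη'η
  simp only [neg_mul] at hwtil hw
  have hv : nrm (fun i => wtil i * exp (-(η * ℓ i)))
      = nrm fun i => a i * exp (-(η * (L + ℓ) i)) := by
    rw [hwtil, nrm_nrm_mul (sum_mul_exp_ne_zero ha _)]
    congr 1
    funext i
    rw [Pi.add_apply, mul_add, neg_add, exp_add, mul_assoc]
  have hstep := optimistic_step_le (ℓ := ℓ) (ℓhat := ℓhat) (hwtil ▸ nrm_mul_exp_pos ha _) hu1
    hη.le
  rw [← hw, hv, ← le_inv_mul_iff₀ hη, mul_sub, mul_add, mul_sub] at hstep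
  have hwtil_kl := inv_mul_kl_nrm_mul_exp (L := L) hu1 ha hη.ne'
  rw [← hwtil] at hwtil_kl
  have hv_kl := inv_mul_kl_nrm_mul_exp (L := L + ℓ) hu1 ha hη.ne'
  have hmono := monotoneOn_scaledLogPartition (fun i => (ha i).le) ha1 (L + ℓ) hη' hη hη'η
  simp only [onesPotential] at hwtil_kl hv_kl ⊢
  linarith

end Simplex

theorem static_regret_ONES_general (n T : ℕ)
    (a : Fin (n + 1) → ℝ) (ha : a ∈ simplex n) (hapos : ∀ i, 0 < a i)
    (η : ℕ → ℝ) (hηmono : ∀ t ∈ Icc 1 T, η (t + 1) ≤ η t) (hηpos : 0 < η (T + 1))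
    (ℓ ℓhat : ℕ → Fin (n + 1) → ℝ)
    (wtil w : ℕ → Fin (n + 1) → ℝ)
    (hwtil : ∀ t ∈ Icc 1 T, wtil t =
      nrm fun i => a i * Real.exp (-(η t) * ∑ s ∈ Ico 1 t, ℓ s i))
    (hw : ∀ t ∈ Icc 1 T, w t =
      nrm fun i => wtil t i * Real.exp (-(η t) * ℓhat t i))
    (u : Fin (n + 1) → ℝ) (hu : u ∈ simplex n) :
    ∑ t ∈ Icc 1 T, ∑ i, ℓ t i * (w t i - u i)
      ≤ (1 / η (T + 1)) * ∑ i, u i * Real.log (u i / a i)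
        + ∑ t ∈ Icc 1 T, (1 / η t) * Q2star (η t * linf (ℓ t - ℓhat t))
        - ∑ t ∈ Icc 1 T, (1 / η t) * ∑ i, w t i * Real.log (w t i / wtil t i) := by
  set L : ℕ → Fin (n + 1) → ℝ := fun t i => ∑ s ∈ Ico 1 t, ℓ s i
  set ψ : ℕ → ℝ := fun t => onesPotential u a (L t) (η t)
  have hηsucc : ∀ t ∈ Icc 1 T, 0 < η (t + 1) := fun t ht =>
    have := mem_Icc.1 ht
    Nat.decreasingInduction' (P := fun k => 0 < η k)
      (fun k hk htk h => h.trans_le (hηmono k (mem_Icc.2 ⟨by omega, by omega⟩)))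
      (by omega : t + 1 ≤ T + 1) hηpos
  have hround : ∀ t ∈ Icc 1 T, ∑ i, ℓ t i * (w t i - u i) + (ψ (t + 1) - ψ t)
      ≤ 1 / η t * Q2star (η t * linf (ℓ t - ℓhat t))
        - 1 / η t * ∑ i, w t i * log (w t i / wtil t i) := fun t ht => by
    have hL : L (t + 1) = L t + ℓ t := funext fun i => sum_Ico_succ_top (mem_Icc.1 ht).1 _
    simpa only [ψ, hL, kl, one_div] using ones_round_le (L := L t) hapos ha.2 hu.2 (hηsucc t ht)
      (hηmono t ht) (hwtil t ht) (hw t ht)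
  have hψ1 : ψ 1 = 0 := by simp [ψ, L, onesPotential, scaledLogPartition, ha.2]
  have hψT := neg_inv_mul_kl_le_onesPotential hu.1 hu.2 hapos (L (T + 1)) hηpos
  have hsum := sum_le_sum hround
  rw [sum_add_distrib, ← Ico_add_one_right_eq_Icc, sum_Ico_sub ψ (by omega),
    Ico_add_one_right_eq_Icc, sum_sub_distrib, hψ1] at hsum
  simp only [kl, ← one_div] at hψT
  linarith

/-- **Static regret for Optimistic Normalized Exponentiated Subgradient
(ONES with `θ_t ≡ 1`).** -/
theorem static_regret_ONES (n T : ℕ) (hT : 1 ≤ T)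
    (a : Fin (n + 1) → ℝ) (ha : a ∈ simplex n) (hapos : ∀ i, 0 < a i)
    (η : ℕ → ℝ) (hηmono : ∀ t ∈ Icc 1 T, η (t + 1) ≤ η t) (hηpos : 0 < η (T + 1))
    (ℓ ℓhat : ℕ → Fin (n + 1) → ℝ)
    (wtil w : ℕ → Fin (n + 1) → ℝ)
    (hwtil : ∀ t ∈ Icc 1 T, wtil t =
      nrm fun i => a i * Real.exp (-(η t) * ∑ s ∈ Ico 1 t, ℓ s i))
    (hw : ∀ t ∈ Icc 1 T, w t =
      nrm fun i => wtil t i * Real.exp (-(η t) * ℓhat t i))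
    (u : Fin (n + 1) → ℝ) (hu : u ∈ simplex n) :
    ∑ t ∈ Icc 1 T, ∑ i, ℓ t i * (w t i - u i)
      ≤ (1 / η (T + 1)) * ∑ i, u i * Real.log (u i / a i)
        + ∑ t ∈ Icc 1 T, (1 / η t) * Q2star (η t * linf (ℓ t - ℓhat t))
        - ∑ t ∈ Icc 1 T, (1 / η t) * ∑ i, w t i * Real.log (w t i / wtil t i) :=
  static_regret_ONES_general n T a ha hapos η hηmono hηpos ℓ ℓhat wtil w hwtil hw u hu
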